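/- arXiv:1604.08402 — 2 statements merged into one kernel-verified Lean document; each statement's English description precedes it below -/
import Mathlib

section
/- Let ε > 0 and let ξ be a Laplace(0, 2/ε) random variable. For every x ∈ [−1,1] and every measurable set S ⊆ ℝ, both Pr(x + ξ ∈ S) ≤ exp(ε/2) · Pr(ξ ∈ S) and Pr(ξ ∈ S) ≤ exp(ε/2) · Pr(x + ξ ∈ S) hold. -/
open MeasureTheory Real

/-! Translating `Laplace(c, 2/ε)` by `x` gives `Laplace(x + c, 2/ε)`, and by the triangle
inequality the densities at locations `c` and `c'` differ pointwise by a factor of at most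
`exp (ε |c - c'| / 2)`. For `|x| ≤ 1` this factor is at most `exp (ε / 2)`. -/

/-- The Laplace distribution with location `c` and scale `2/ε`,
given by the density `t ↦ (ε/4) * exp (-ε * |t - c| / 2)`. -/
noncomputable def laplaceMeasure (ε c : ℝ) : Measure ℝ :=
  volume.withDensity fun t => ENNReal.ofReal (ε / 4 * Real.exp (-(ε * |t - c|) / 2))

lemma laplaceMeasure_map_const_add (ε c x : ℝ) :
    (laplaceMeasure ε c).map (fun t => x + t) = laplaceMeasure ε (x + c) := by
  ext S hS
  have hpre : MeasurableSet ((fun t => x + t) ⁻¹' S) := hS.preimage (measurable_const_add x)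
  rw [Measure.map_apply (measurable_const_add x) hS, laplaceMeasure, laplaceMeasure,
    withDensity_apply _ hpre, withDensity_apply _ hS]
  refine Eq.trans ?_ ((measurePreserving_add_left volume x).setLIntegral_comp_preimage_emb
    (measurableEmbedding_addLeft x) _ S)
  simp only [add_sub_add_left_eq_sub]

lemma exp_neg_mul_abs_sub_le {ε : ℝ} (hε : 0 ≤ ε) (c c' t : ℝ) :
    exp (-(ε * |t - c|) / 2) ≤ exp (ε * |c - c'| / 2) * exp (-(ε * |t - c'|) / 2) := by
  rw [← exp_add, exp_le_exp]
  have := mul_le_mul_of_nonneg_left (abs_sub_le t c c') hε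
  linarith

lemma laplaceMeasure_le_smul {ε : ℝ} (hε : 0 ≤ ε) (c c' : ℝ) :
    laplaceMeasure ε c ≤ ENNReal.ofReal (exp (ε * |c - c'| / 2)) • laplaceMeasure ε c' := by
  rw [laplaceMeasure, laplaceMeasure, ← withDensity_smul' _ _ ENNReal.ofReal_ne_top]
  refine withDensity_mono (ae_of_all _ fun t => ?_)
  rw [Pi.smul_apply, smul_eq_mul, ← ENNReal.ofReal_mul (exp_pos _).le, mul_left_comm]
  dsimp only
  gcongr
  exact exp_neg_mul_abs_sub_le hε c c' t

theorem laplace_shift_halfdp_general (ε : ℝ) (hε : 0 < ε) (x : ℝ)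
    (hx : x ∈ Set.Icc (-1 : ℝ) 1) (S : Set ℝ) :
    (laplaceMeasure ε 0).map (fun t => x + t) S ≤
        ENNReal.ofReal (Real.exp (ε / 2)) * laplaceMeasure ε 0 S ∧
      laplaceMeasure ε 0 S ≤
        ENNReal.ofReal (Real.exp (ε / 2)) * (laplaceMeasure ε 0).map (fun t => x + t) S := by
  have hfactor : ENNReal.ofReal (exp (ε * |x| / 2)) ≤ ENNReal.ofReal (exp (ε / 2)) := by
    gcongr
    nlinarith [abs_le.2 hx]
  rw [laplaceMeasure_map_const_add, add_zero]
  constructor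
  · calc laplaceMeasure ε x S ≤ ENNReal.ofReal (exp (ε * |x - 0| / 2)) * laplaceMeasure ε 0 S :=
          laplaceMeasure_le_smul hε.le x 0 S
      _ ≤ _ := by rw [sub_zero]; gcongr
  · calc laplaceMeasure ε 0 S ≤ ENNReal.ofReal (exp (ε * |0 - x| / 2)) * laplaceMeasure ε x S :=
          laplaceMeasure_le_smul hε.le 0 x S
      _ ≤ _ := by rw [zero_sub, abs_neg]; gcongr

/-- If `ξ ~ Laplace(0, 2/ε)`, then for every `x ∈ [-1,1]` and every measurable `S ⊆ ℝ`,
both `Pr(x + ξ ∈ S) ≤ exp (ε/2) * Pr(ξ ∈ S)` and `Pr(ξ ∈ S) ≤ exp (ε/2) * Pr(x + ξ ∈ S)`. -/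
theorem laplace_shift_halfdp (ε : ℝ) (hε : 0 < ε) (x : ℝ)
    (hx : x ∈ Set.Icc (-1 : ℝ) 1) (S : Set ℝ) (hS : MeasurableSet S) :
    (laplaceMeasure ε 0).map (fun t => x + t) S ≤
        ENNReal.ofReal (Real.exp (ε / 2)) * laplaceMeasure ε 0 S ∧
      laplaceMeasure ε 0 S ≤
        ENNReal.ofReal (Real.exp (ε / 2)) * (laplaceMeasure ε 0).map (fun t => x + t) S :=
  laplace_shift_halfdp_general ε hε x hx S
end

section
/- In the modified Laplace matrix model, the expected squared Frobenius norm of the perturbation on the common support satisfies E‖P_{Ω_Z ∩ Ω_X}(X − Z)‖_F² ≤ 8s/ε², where s = |Ω_X|. -/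
open MeasureTheory Real

/-- Measurable space structure on `Option α`, via the equivalence with `α ⊕ PUnit`. -/
instance instMeasurableSpaceOption {α : Type u_1} [MeasurableSpace α] :
    MeasurableSpace (Option α) :=
  MeasurableSpace.comap (Equiv.optionEquivSumPUnit.{0, u_1} α) inferInstance

/-- The modified Laplace mechanism on a single rating.  `none` is the missing rating `?`.
A present rating `x` is sent to `x + ξ` with probability `e^{ε/2}/(e^{ε/2}+1)` and to `?`
otherwise; a missing rating is sent to `?` with probability `e^{ε/2}/(e^{ε/2}+1)` and to `ξ`
otherwise, where `ξ ~ Laplace(0, 2/ε)`. -/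
noncomputable def modLaplace (ε : ℝ) (x : Option ℝ) : Measure (Option ℝ) :=
  match x with
  | some r =>
      ENNReal.ofReal (Real.exp (ε / 2) / (Real.exp (ε / 2) + 1)) •
          (laplaceMeasure ε r).map Option.some +
        ENNReal.ofReal (1 / (Real.exp (ε / 2) + 1)) • Measure.dirac (none : Option ℝ)
  | none =>
      ENNReal.ofReal (Real.exp (ε / 2) / (Real.exp (ε / 2) + 1)) •
          Measure.dirac (none : Option ℝ) +
        ENNReal.ofReal (1 / (Real.exp (ε / 2) + 1)) • (laplaceMeasure ε 0).map Option.some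

/-- Distribution of the matrix `Z` obtained by applying the modified Laplace mechanism
independently to every entry of the partially observed rating matrix `X`
(`none` encodes a missing entry). -/
noncomputable def modLaplaceMatrix (ε : ℝ) {m n : ℕ} (X : Fin m × Fin n → Option ℝ) :
    Measure (Fin m × Fin n → Option ℝ) :=
  Measure.pi fun p => modLaplace ε (X p)

/-- Support of the non-missing entries of a partially observed matrix. -/
def suppOf {m n : ℕ} (A : Fin m × Fin n → Option ℝ) : Finset (Fin m × Fin n) :=
  Finset.univ.filter fun p => (A p).isSome

/-!
The integrand is a sum over `p ∈ Ω_X` of terms depending on `Z p` alone, so its expectation is a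
sum of expectations under the marginals `modLaplace ε (X p)`; no independence is needed. For an
observed rating `r`, `Z p` is `r + ξ` with probability at most one and missing otherwise, so each
term is at most `E ξ² = 2! (2/ε)² = 8/ε²`, the second absolute moment of `Laplace(0, 2/ε)`.
-/

open Set
open scoped ENNReal Nat

section OptionMeasurable

variable {α β : Type*} [MeasurableSpace α] [MeasurableSpace β]

-- The universe of `PUnit` is the one fixed by `instMeasurableSpaceOption`.
lemma measurable_optionEquivSumPUnit : Measurable (Equiv.optionEquivSumPUnit.{0} α) :=
  comap_measurable _

lemma measurable_option_some : Measurable (Option.some : α → Option α) :=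
  measurable_comap_iff.2 measurable_inl

lemma Measurable.option_elim {f : α → β} (hf : Measurable f) (b : β) :
    Measurable fun z : Option α => z.elim b f := by
  have h : (fun z : Option α => z.elim b f) =
      Sum.elim f (fun _ => b) ∘ Equiv.optionEquivSumPUnit.{0} α := by
    funext z; cases z <;> rfl
  rw [h]
  exact (hf.sumElim measurable_const).comp measurable_optionEquivSumPUnit

end OptionMeasurable

lemma lintegral_comp_abs (f : ℝ → ℝ≥0∞) : ∫⁻ x, f |x| = 2 * ∫⁻ x in Ioi 0, f x := by
  have hpos : ∫⁻ x in Ioi 0, f |x| = ∫⁻ x in Ioi 0, f x :=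
    setLIntegral_congr_fun measurableSet_Ioi fun x hx => by rw [abs_of_pos hx]
  have hneg : ∫⁻ x in Iic 0, f |x| = ∫⁻ x in Ioi 0, f |x| := by
    rw [restrict_Ioi_eq_restrict_Ici, ← lintegral_indicator measurableSet_Iic,
      ← lintegral_indicator measurableSet_Ici, ← lintegral_neg_eq_self]
    congr 1
    funext x
    simp [indicator, abs_neg]
  conv_lhs => rw [← setLIntegral_univ, ← Iic_union_Ioi,
    lintegral_union measurableSet_Ioi (Iic_disjoint_Ioi le_rfl), hneg, hpos]
  rw [two_mul]

lemma lintegral_Ioi_pow_mul_exp_neg_mul {b : ℝ} (hb : 0 < b) (k : ℕ) :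
    ∫⁻ x in Ioi 0, ENNReal.ofReal (x ^ k * exp (-(b * x))) =
      ENNReal.ofReal (k ! / b ^ (k + 1)) := by
  have hint : IntegrableOn (fun x : ℝ => x ^ k * exp (-(b * x))) (Ioi 0) := by
    simpa [rpow_natCast, rpow_one] using integrableOn_rpow_mul_exp_neg_mul_rpow (p := 1)
      (s := k) (by linarith [(k.cast_nonneg : (0:ℝ) ≤ k)]) one_pos hb
  have hgamma := integral_rpow_mul_exp_neg_mul_Ioi (a := k + 1) (by positivity) hb
  simp only [add_sub_cancel_right, rpow_natCast, Gamma_nat_eq_factorial] at hgamma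
  have hnonneg : ∀ x ∈ Ioi (0 : ℝ), 0 ≤ x ^ k * exp (-(b * x)) := fun x hx =>
    mul_nonneg (pow_nonneg (le_of_lt hx) k) (exp_pos _).le
  rw [← ofReal_integral_eq_lintegral_ofReal hint
    (ae_restrict_of_forall_mem measurableSet_Ioi hnonneg), hgamma]
  rw [← Nat.cast_succ, rpow_natCast, one_div_pow, one_div_mul_eq_div]

theorem lintegral_abs_sub_pow_laplaceMeasure {ε : ℝ} (hε : 0 < ε) (c : ℝ) (k : ℕ) :
    ∫⁻ t, ENNReal.ofReal (|t - c| ^ k) ∂laplaceMeasure ε c =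
      ENNReal.ofReal (k ! * (2 / ε) ^ k) := by
  have hdensity (x : ℝ) : ENNReal.ofReal (ε / 4 * exp (-(ε * x) / 2)) * ENNReal.ofReal (x ^ k) =
      ENNReal.ofReal (ε / 4) * ENNReal.ofReal (x ^ k * exp (-(ε / 2 * x))) := by
    rw [← ENNReal.ofReal_mul (by positivity), ← ENNReal.ofReal_mul (by positivity)]
    ring_nf
  rw [laplaceMeasure, lintegral_withDensity_eq_lintegral_mul _ (by fun_prop) (by fun_prop)]
  simp only [Pi.mul_apply]
  rw [lintegral_sub_right_eq_self
      (fun x => ENNReal.ofReal (ε / 4 * exp (-(ε * |x|) / 2)) * ENNReal.ofReal (|x| ^ k)) c,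
    lintegral_comp_abs (fun x => ENNReal.ofReal (ε / 4 * exp (-(ε * x) / 2)) *
      ENNReal.ofReal (x ^ k)),
    lintegral_congr hdensity, lintegral_const_mul _ (by fun_prop),
    lintegral_Ioi_pow_mul_exp_neg_mul (by positivity), ← ENNReal.ofReal_ofNat 2,
    ← ENNReal.ofReal_mul (by positivity), ← ENNReal.ofReal_mul (by positivity)]
  congr 1
  rw [pow_succ, div_pow, div_pow]
  field_simp
  ring

lemma isProbabilityMeasure_laplaceMeasure {ε : ℝ} (hε : 0 < ε) (c : ℝ) :
    IsProbabilityMeasure (laplaceMeasure ε c) :=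
  ⟨by simpa using lintegral_abs_sub_pow_laplaceMeasure hε c 0⟩

lemma isProbabilityMeasure_modLaplace {ε : ℝ} (hε : 0 < ε) (x : Option ℝ) :
    IsProbabilityMeasure (modLaplace ε x) := by
  have hweights : ENNReal.ofReal (exp (ε / 2) / (exp (ε / 2) + 1)) +
      ENNReal.ofReal (1 / (exp (ε / 2) + 1)) = 1 := by
    rw [← ENNReal.ofReal_add (by positivity) (by positivity), ← ENNReal.ofReal_one]
    congr 1
    field_simp
  have := isProbabilityMeasure_laplaceMeasure hε
  constructor
  cases x <;>
    simp only [modLaplace, Measure.add_apply, Measure.smul_apply, smul_eq_mul, measure_univ,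
      Measure.map_apply measurable_option_some MeasurableSet.univ, preimage_univ, mul_one] <;>
    exact hweights

lemma lintegral_modLaplace_some (ε r : ℝ) {f : Option ℝ → ℝ≥0∞} (hf : Measurable f) :
    ∫⁻ z, f z ∂modLaplace ε (some r) =
      ENNReal.ofReal (exp (ε / 2) / (exp (ε / 2) + 1)) * ∫⁻ t, f (some t) ∂laplaceMeasure ε r +
        ENNReal.ofReal (1 / (exp (ε / 2) + 1)) * f none := by
  rw [modLaplace, lintegral_add_measure, lintegral_smul_measure, lintegral_smul_measure,
    lintegral_map hf measurable_option_some, lintegral_dirac' _ hf, smul_eq_mul, smul_eq_mul]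

/-- The contribution of an entry with rating `r` and perturbed value `z` to
`‖P_{Ω_Z ∩ Ω_X}(X − Z)‖_F²`. -/
def observedSqError (r : ℝ) (z : Option ℝ) : ℝ≥0∞ :=
  z.elim 0 fun t => ENNReal.ofReal ((r - t) ^ 2)

lemma measurable_observedSqError (r : ℝ) : Measurable (observedSqError r) :=
  Measurable.option_elim (by fun_prop) 0

lemma lintegral_observedSqError_modLaplace_le {ε : ℝ} (hε : 0 < ε) (r : ℝ) :
    ∫⁻ z, observedSqError r z ∂modLaplace ε (some r) ≤ ENNReal.ofReal (8 / ε ^ 2) := by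
  have hmoment : ∫⁻ t, ENNReal.ofReal ((r - t) ^ 2) ∂laplaceMeasure ε r =
      ENNReal.ofReal (8 / ε ^ 2) := by
    simp_rw [← sq_abs (r - _), abs_sub_comm r]
    rw [lintegral_abs_sub_pow_laplaceMeasure hε r 2]
    congr 1
    norm_num [Nat.factorial, div_pow]
    ring
  have hprob_le_one : ENNReal.ofReal (exp (ε / 2) / (exp (ε / 2) + 1)) ≤ 1 :=
    ENNReal.ofReal_le_one.2 ((div_le_one (by positivity)).2 (by linarith))
  rw [lintegral_modLaplace_some ε r (measurable_observedSqError r)]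
  simp only [observedSqError, Option.elim, mul_zero, add_zero, hmoment]
  exact mul_le_of_le_one_left zero_le hprob_le_one

lemma lintegral_modLaplaceMatrix_eval {ε : ℝ} (hε : 0 < ε) {m n : ℕ}
    (X : Fin m × Fin n → Option ℝ) (p : Fin m × Fin n) {g : Option ℝ → ℝ≥0∞}
    (hg : Measurable g) :
    ∫⁻ Z, g (Z p) ∂modLaplaceMatrix ε X = ∫⁻ z, g z ∂modLaplace ε (X p) :=
  have := fun q => isProbabilityMeasure_modLaplace hε (X q)
  (measurePreserving_eval _ p).lintegral_comp hg

lemma ofReal_sum_sq_sub_inter_suppOf {m n : ℕ} (X Z : Fin m × Fin n → Option ℝ) :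
    ENNReal.ofReal (∑ p ∈ suppOf Z ∩ suppOf X, ((X p).getD 0 - (Z p).getD 0) ^ 2) =
      ∑ p ∈ suppOf X, observedSqError ((X p).getD 0) (Z p) := by
  have hinter : suppOf Z ∩ suppOf X = (suppOf X).filter fun p => (Z p).isSome := by
    ext p
    simp only [suppOf, Finset.mem_inter, Finset.mem_filter, Finset.mem_univ, true_and, and_comm]
  rw [hinter, Finset.sum_filter, ENNReal.ofReal_sum_of_nonneg fun p _ => by positivity]
  refine Finset.sum_congr rfl fun p _ => ?_
  cases Z p <;> simp [observedSqError]

theorem modLaplace_common_support_bound_general (ε : ℝ) (hε : 0 < ε) (m n : ℕ)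
    (X : Fin m × Fin n → Option ℝ) :
    ∫⁻ Z, ENNReal.ofReal
        (∑ p ∈ suppOf Z ∩ suppOf X, ((X p).getD 0 - (Z p).getD 0) ^ 2)
        ∂modLaplaceMatrix ε X ≤
      ENNReal.ofReal (8 * (suppOf X).card / ε ^ 2) := by
  have hentry : ∀ p ∈ suppOf X, ∫⁻ Z, observedSqError ((X p).getD 0) (Z p)
      ∂modLaplaceMatrix ε X ≤ ENNReal.ofReal (8 / ε ^ 2) := by
    intro p hp
    obtain ⟨r, hr⟩ := Option.isSome_iff_exists.1 (Finset.mem_filter.1 hp).2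
    rw [lintegral_modLaplaceMatrix_eval hε X p (measurable_observedSqError _), hr,
      Option.getD_some]
    exact lintegral_observedSqError_modLaplace_le hε r
  calc _ = ∑ p ∈ suppOf X,
          ∫⁻ Z, observedSqError ((X p).getD 0) (Z p) ∂modLaplaceMatrix ε X := by
        simp_rw [ofReal_sum_sq_sub_inter_suppOf]
        exact lintegral_finsetSum _ fun p _ =>
          (measurable_observedSqError _).comp (measurable_pi_apply p)
    _ ≤ ∑ _p ∈ suppOf X, ENNReal.ofReal (8 / ε ^ 2) := Finset.sum_le_sum hentry
    _ = ENNReal.ofReal (8 * (suppOf X).card / ε ^ 2) := by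
        rw [Finset.sum_const, nsmul_eq_mul, ← ENNReal.ofReal_natCast,
          ← ENNReal.ofReal_mul (Nat.cast_nonneg _), mul_div_assoc', mul_comm]

/-- Modified Laplace matrix model: the expected squared Frobenius norm of the perturbation
on the common support satisfies `E‖P_{Ω_Z ∩ Ω_X}(X − Z)‖_F² ≤ 8s/ε²`, where `s = |Ω_X|`. -/
theorem modLaplace_common_support_bound (ε : ℝ) (hε : 0 < ε) (m n : ℕ)
    (X : Fin m × Fin n → Option ℝ)
    (hX : ∀ p, ∀ r : ℝ, X p = some r → r ∈ Set.Icc (-1 : ℝ) 1) :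
    ∫⁻ Z, ENNReal.ofReal
        (∑ p ∈ suppOf Z ∩ suppOf X, ((X p).getD 0 - (Z p).getD 0) ^ 2)
        ∂modLaplaceMatrix ε X ≤
      ENNReal.ofReal (8 * (suppOf X).card / ε ^ 2) :=
  modLaplace_common_support_bound_general ε hε m n X
end
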